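/- If the edgewise subdivision sd X of a simplicial set X is Segal, then the upper décalage dec_⊤X is Segal. -/

import Mathlib

open CategoryTheory Simplicial

universe u

/-- A commuting square of sets (top `f`, left `g`, right `h`, bottom `k`) is a pullback
if the canonical map to the fiber product is a bijection. -/
def IsPullbackSet {A B C D : Type u} (f : A → B) (g : A → C) (h : B → D) (k : C → D) : Prop :=
  (∀ a, h (f a) = k (g a)) ∧ ∀ (b : B) (c : C), h b = k c → ∃! a : A, f a = b ∧ g a = c

/-- The Segal condition for the edgewise subdivision `sd X` (which has `(sd X)_n = X_{2n+1}`,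
with `i`-th face `d_{n-i} ∘ d_{n+i+1} : X_{2n+1} → X_{2n-1}` for `0 ≤ i ≤ n`), stated
explicitly in terms of `X`: for every `n ≥ 1` (here `n = m + 1`), the Segal square of `sd X`
with top `d_0`, left `d_{n+1}`, right `d_n`, bottom `d_0` is the square with
top `d_{m+2} ∘ d_{m+3} : X_{2m+5} → X_{2m+3}`, left `d_0 ∘ d_{2m+5} : X_{2m+5} → X_{2m+3}`,
right `d_0 ∘ d_{2m+3} : X_{2m+3} → X_{2m+1}`, bottom `d_{m+1} ∘ d_{m+2}`. -/
def SdSegal (X : SSet.{u}) : Prop :=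
  ∀ m : ℕ,
    IsPullbackSet
      (fun x => X.δ (⟨m + 2, by omega⟩ : Fin (2 * m + 5))
        (X.δ (⟨m + 3, by omega⟩ : Fin (2 * m + 6)) x))
      (fun x => X.δ (⟨0, by omega⟩ : Fin (2 * m + 5))
        (X.δ (⟨2 * m + 5, by omega⟩ : Fin (2 * m + 6)) x))
      (fun x => X.δ (⟨0, by omega⟩ : Fin (2 * m + 3))
        (X.δ (⟨2 * m + 3, by omega⟩ : Fin (2 * m + 4)) x))
      (fun x => X.δ (⟨m + 1, by omega⟩ : Fin (2 * m + 3))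
        (X.δ (⟨m + 2, by omega⟩ : Fin (2 * m + 4)) x))

/-- The Segal condition for the upper décalage `dec⊤ X` (which has `(dec⊤ X)_n = X_{n+1}`,
with `k`-th face `d_k : X_{n+1} → X_n` for `0 ≤ k ≤ n`), stated explicitly in terms of `X`. -/
def UpperDecSegal (X : SSet.{u}) : Prop :=
  ∀ m : ℕ,
    IsPullbackSet
      (fun x => X.δ (0 : Fin (m + 4)) x)
      (fun x => X.δ (⟨m + 2, by omega⟩ : Fin (m + 4)) x)
      (fun x => X.δ (⟨m + 1, by omega⟩ : Fin (m + 3)) x)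
      (fun x => X.δ (0 : Fin (m + 3)) x)

/-!
For every `m`, the Segal square of `dec⊤ X` with apex `X_{m+3}` is a retract of the transposed
Segal square of `sd X` with apex `X_{2m+5}`, and a retract of a pullback square is a pullback.
The square embeds along `X.map (retract…).op` and is retracted along `X.map (section…).op`,
for monotone maps with `section… ≫ retract… = 𝟙`. The key map `retractApex` collapses
`⦋2m+5⦌` onto `⦋m+3⦌`, sending the lower half identically onto `0, …, m+2` and the upper half
to `m+2` and `m+3`, so that deleting the outer pair of vertices of `⦋2m+5⦌` corresponds to
`d_0` and deleting the middle pair to `d_{m+2}`.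
-/

namespace IsPullbackSet

variable {A B C D : Type u} {f : A → B} {g : A → C} {h : B → D} {k : C → D}

theorem flip (hP : IsPullbackSet f g h k) : IsPullbackSet g f k h :=
  ⟨fun a => (hP.1 a).symm, fun c b hcb =>
    (hP.2 b c hcb.symm).imp fun _ ⟨hfg, huniq⟩ => ⟨hfg.symm, fun a ha => huniq a ha.symm⟩⟩

theorem of_retract {A' B' C' D' : Type u}
    {f' : A' → B'} {g' : A' → C'} {h' : B' → D'} {k' : C' → D'}
    (hP : IsPullbackSet f' g' h' k') (hcomm : ∀ a, h (f a) = k (g a))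
    {iA : A → A'} {iB : B → B'} {iC : C → C'} {iD : D → D'}
    {rA : A' → A} {rB : B' → B} {rC : C' → C}
    (hf : ∀ a, f' (iA a) = iB (f a)) (hg : ∀ a, g' (iA a) = iC (g a))
    (hh : ∀ b, h' (iB b) = iD (h b)) (hk : ∀ c, k' (iC c) = iD (k c))
    (hrf : ∀ a', f (rA a') = rB (f' a')) (hrg : ∀ a', g (rA a') = rC (g' a'))
    (hA : Function.LeftInverse rA iA) (hB : Function.LeftInverse rB iB)
    (hC : Function.LeftInverse rC iC) :
    IsPullbackSet f g h k := by
  refine ⟨hcomm, fun b c hbc => ?_⟩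
  obtain ⟨a', ⟨hfa', hga'⟩, huniq⟩ := hP.2 (iB b) (iC c) (by rw [hh, hk, hbc])
  refine ⟨rA a', ⟨by rw [hrf, hfa', hB], by rw [hrg, hga', hC]⟩, ?_⟩
  rintro a ⟨hfa, hga⟩
  have : iA a = a' := huniq (iA a) ⟨by rw [hf, hfa], by rw [hg, hga]⟩
  rw [← this, hA]

end IsPullbackSet

namespace SimplexCategory

def mkHomOfNat (k l : ℕ) (f : ℕ → ℕ) (mono : ∀ i j, i ≤ j → f i ≤ f j)
    (bound : ∀ i ≤ k, f i ≤ l) : ⦋k⦌ ⟶ ⦋l⦌ :=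
  mkHom ⟨fun i => ⟨f i, Nat.lt_succ_of_le (bound i (Nat.lt_succ_iff.mp i.2))⟩,
    fun i j hij => mono i j hij⟩

lemma mkHomOfNat_apply_val {k l : ℕ} {f : ℕ → ℕ} {mono bound} (i : Fin (k + 1)) :
    ((mkHomOfNat k l f mono bound).toOrderHom i : ℕ) = f i := rfl

lemma δ_apply_val {n : ℕ} (i : Fin (n + 2)) (j : Fin (n + 1)) :
    ((δ i).toOrderHom j : ℕ) = if j.1 < i.1 then j.1 else j.1 + 1 := by
  change (i.succAbove j : ℕ) = _
  split_ifs with hji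
  · rw [Fin.succAbove_of_castSucc_lt _ _ hji, Fin.val_castSucc]
  · rw [Fin.succAbove_of_le_castSucc _ _ (not_lt.mp hji), Fin.val_succ]

lemma hom_ext_val {k l : ℕ} {f g : ⦋k⦌ ⟶ ⦋l⦌}
    (w : ∀ i : Fin (k + 1), (f.toOrderHom i : ℕ) = g.toOrderHom i) : f = g :=
  Hom.ext _ _ (OrderHom.ext _ _ (funext fun i => Fin.ext (w i)))

end SimplexCategory

namespace EdgewiseDecalage

open SimplexCategory

variable (m : ℕ)

def retractApex : ⦋2 * m + 5⦌ ⟶ ⦋m + 3⦌ :=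
  mkHomOfNat _ _ (fun p => if p ≤ m + 1 then p else if p ≤ m + 3 then m + 2 else m + 3)
    (by intro i j hij; split_ifs <;> omega) (by intro i hi; split_ifs <;> omega)

def sectionApex : ⦋m + 3⦌ ⟶ ⦋2 * m + 5⦌ :=
  mkHomOfNat _ _ (fun p => if p ≤ m + 2 then p else m + 4)
    (by intro i j hij; split_ifs <;> omega) (by intro i hi; split_ifs <;> omega)

def retractOuter : ⦋2 * m + 3⦌ ⟶ ⦋m + 2⦌ :=
  mkHomOfNat _ _ (fun p => if p ≤ m + 1 then p else if p ≤ m + 2 then m + 1 else m + 2)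
    (by intro i j hij; split_ifs <;> omega) (by intro i hi; split_ifs <;> omega)

def sectionOuter : ⦋m + 2⦌ ⟶ ⦋2 * m + 3⦌ :=
  mkHomOfNat _ _ (fun p => if p ≤ m + 1 then p else m + 3)
    (by intro i j hij; split_ifs <;> omega) (by intro i hi; split_ifs <;> omega)

def retractMiddle : ⦋2 * m + 3⦌ ⟶ ⦋m + 2⦌ :=
  mkHomOfNat _ _ (fun p => min p (m + 2)) (by intro i j hij; omega) (by intro i hi; omega)

def sectionMiddle : ⦋m + 2⦌ ⟶ ⦋2 * m + 3⦌ :=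
  mkHomOfNat _ _ id (fun _ _ hij => hij) (by intro i hi; dsimp; omega)

def retractBase : ⦋2 * m + 1⦌ ⟶ ⦋m + 1⦌ :=
  mkHomOfNat _ _ (fun p => min p (m + 1)) (by intro i j hij; omega) (by intro i hi; omega)

lemma sectionApex_comp_retractApex : sectionApex m ≫ retractApex m = 𝟙 _ :=
  hom_ext_val fun _ => by
    simp only [comp_toOrderHom, OrderHom.comp_coe, Function.comp_apply, id_toOrderHom,
      OrderHom.id_coe, id_eq, mkHomOfNat_apply_val, sectionApex, retractApex]
    grind

lemma sectionOuter_comp_retractOuter : sectionOuter m ≫ retractOuter m = 𝟙 _ :=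
  hom_ext_val fun _ => by
    simp only [comp_toOrderHom, OrderHom.comp_coe, Function.comp_apply, id_toOrderHom,
      OrderHom.id_coe, id_eq, mkHomOfNat_apply_val, sectionOuter, retractOuter]
    grind

lemma sectionMiddle_comp_retractMiddle : sectionMiddle m ≫ retractMiddle m = 𝟙 _ :=
  hom_ext_val fun _ => by
    simp only [comp_toOrderHom, OrderHom.comp_coe, Function.comp_apply, id_toOrderHom,
      OrderHom.id_coe, id_eq, mkHomOfNat_apply_val, sectionMiddle, retractMiddle]
    grind

lemma outerFace_comp_retractApex :
    δ ⟨0, by omega⟩ ≫ δ ⟨2 * m + 5, by omega⟩ ≫ retractApex m =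
      retractOuter m ≫ δ 0 :=
  hom_ext_val fun _ => by
    simp only [comp_toOrderHom, OrderHom.comp_coe, Function.comp_apply, δ_apply_val,
      mkHomOfNat_apply_val, retractApex, retractOuter]
    grind

lemma middleFace_comp_retractApex :
    δ ⟨m + 2, by omega⟩ ≫ δ ⟨m + 3, by omega⟩ ≫ retractApex m =
      retractMiddle m ≫ δ ⟨m + 2, by omega⟩ :=
  hom_ext_val fun _ => by
    simp only [comp_toOrderHom, OrderHom.comp_coe, Function.comp_apply, δ_apply_val,
      mkHomOfNat_apply_val, retractApex, retractMiddle]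
    grind

lemma middleFace_comp_retractOuter :
    δ ⟨m + 1, by omega⟩ ≫ δ ⟨m + 2, by omega⟩ ≫ retractOuter m =
      retractBase m ≫ δ ⟨m + 1, by omega⟩ :=
  hom_ext_val fun _ => by
    simp only [comp_toOrderHom, OrderHom.comp_coe, Function.comp_apply, δ_apply_val,
      mkHomOfNat_apply_val, retractOuter, retractBase]
    grind

lemma outerFace_comp_retractMiddle :
    δ ⟨0, by omega⟩ ≫ δ ⟨2 * m + 3, by omega⟩ ≫ retractMiddle m =
      retractBase m ≫ δ 0 :=
  hom_ext_val fun _ => by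
    simp only [comp_toOrderHom, OrderHom.comp_coe, Function.comp_apply, δ_apply_val,
      mkHomOfNat_apply_val, retractMiddle, retractBase]
    grind

lemma δ_zero_comp_sectionApex :
    δ 0 ≫ sectionApex m =
      sectionOuter m ≫ δ ⟨0, by omega⟩ ≫ δ ⟨2 * m + 5, by omega⟩ :=
  hom_ext_val fun _ => by
    simp only [comp_toOrderHom, OrderHom.comp_coe, Function.comp_apply, δ_apply_val,
      mkHomOfNat_apply_val, sectionApex, sectionOuter]
    grind

lemma δ_last_comp_sectionApex :
    δ ⟨m + 2, by omega⟩ ≫ sectionApex m =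
      sectionMiddle m ≫ δ ⟨m + 2, by omega⟩ ≫ δ ⟨m + 3, by omega⟩ :=
  hom_ext_val fun _ => by
    simp only [comp_toOrderHom, OrderHom.comp_coe, Function.comp_apply, δ_apply_val,
      mkHomOfNat_apply_val, sectionApex, sectionMiddle]
    grind

end EdgewiseDecalage

open EdgewiseDecalage in
/-- If the edgewise subdivision `sd X` of a simplicial set `X` is Segal, then the upper
décalage `dec⊤ X` is Segal. -/
theorem sdSegal_implies_upperDecSegal (X : SSet.{u}) (h : SdSegal X) : UpperDecSegal X := by
  intro m
  refine (h m).flip.of_retract (fun a => (X.δ_comp_δ_apply (Fin.zero_le _) a).symm)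
    (iA := X.map (retractApex m).op) (iB := X.map (retractOuter m).op)
    (iC := X.map (retractMiddle m).op) (iD := X.map (retractBase m).op)
    (rA := X.map (sectionApex m).op) (rB := X.map (sectionOuter m).op)
    (rC := X.map (sectionMiddle m).op) ?_ ?_ ?_ ?_ ?_ ?_ ?_ ?_ ?_ <;>
  intro x <;> simp only [SimplicialObject.δ, ← Functor.map_comp_apply, ← op_comp]
  · rw [outerFace_comp_retractApex]
  · rw [middleFace_comp_retractApex]
  · rw [middleFace_comp_retractOuter]
  · rw [outerFace_comp_retractMiddle]
  · rw [δ_zero_comp_sectionApex]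
  · rw [δ_last_comp_sectionApex]
  · rw [sectionApex_comp_retractApex, op_id, Functor.map_id_apply]
  · rw [sectionOuter_comp_retractOuter, op_id, Functor.map_id_apply]
  · rw [sectionMiddle_comp_retractMiddle, op_id, Functor.map_id_apply]
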